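/- arXiv:1604.03572 — 5 statements merged into one kernel-verified Lean document; each statement's English description precedes it below -/
import Mathlib

section
/- Every Bratteli diagram admits a probability weight function; that is, for every Bratteli diagram B = (V,E) with all levels finite and nonempty, there exists a weight function w: V_0 ∪ E → [0,∞) satisfying the weight axioms with ∑_{v∈V_0} w(v) = 1. -/
/-!
A nonnegative function `g` on vertices that is harmonic, `g(v) = ∑_{s(e) = v} g(r(e))`, with
`∑_{V₀} g = 1` yields a probability weight function: put `w(e) = g(r(e)) / g(s(e))` (uniform on the
edges leaving `v` when `g(v) = 0`), so that the weight of a path ending at `v` telescopes to `g(v)`.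
Such a `g` is a limit point, by compactness, of the numbers of paths from `v` up to level `n`,
normalized by the number of all paths from level `0` to level `n`.
Harmonicity gives `∑_v N(v) g(v) = 1`, where `N(v)` is the number of paths from level `0` to `v`,
so `g(v) ≤ 1 / N(v)`. Along a path `x` whose tail class is infinite, `N(s(xₙ)) → ∞`: any `M` paths
tail equivalent to `x` agree with it from some level `n` on, so they have `M` distinct prefixes
ending at `s(xₙ)`.
-/

open Classical Filter Topology MeasureTheory

structure Bratteli where
  V : ℕ → Type
  E : ℕ → Type
  finV : ∀ k, Fintype (V k)
  finE : ∀ k, Fintype (E k)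
  neV : ∀ k, Nonempty (V k)
  src : ∀ k, E k → V k
  rng : ∀ k, E k → V (k + 1)
  srcSurj : ∀ k, Function.Surjective (src k)
  rngSurj : ∀ k, Function.Surjective (rng k)

attribute [instance] Bratteli.finV Bratteli.finE Bratteli.neV

namespace Bratteli

variable {B : Bratteli}

/-- An infinite path in a Bratteli diagram, starting at level 0. -/
structure Path (B : Bratteli) where
  edges : ∀ k, B.E k
  compat : ∀ k, B.rng k (edges k) = B.src (k + 1) (edges (k + 1))

/-- Tail equivalence: agreement in all but finitely many coordinates. -/
def TailEquiv (x y : B.Path) : Prop := ∃ N, ∀ k, N ≤ k → x.edges k = y.edges k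

def tailClass (x : B.Path) : Set B.Path := {y | TailEquiv x y}

/-- Cylinder-set (product of discrete) topology on the path space. -/
instance (B : Bratteli) : TopologicalSpace B.Path :=
  TopologicalSpace.induced Path.edges (@Pi.topologicalSpace ℕ (fun k => B.E k) (fun _ => ⊥))

/-- A finite path from level 0 through level n. -/
structure FinPath (B : Bratteli) (n : ℕ) where
  edges : ∀ k, k < n → B.E k
  compat : ∀ k (h : k + 1 < n),
    B.rng k (edges k (Nat.lt_of_succ_lt h)) = B.src (k + 1) (edges (k + 1) h)

def FinPath.startV {n : ℕ} (p : B.FinPath (n + 1)) : B.V 0 :=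
  B.src 0 (p.edges 0 (Nat.succ_pos n))

def FinPath.endV {n : ℕ} (p : B.FinPath (n + 1)) : B.V (n + 1) :=
  B.rng n (p.edges n (Nat.lt_succ_self n))

/-- A finite path from level a of length n. -/
structure SegPath (B : Bratteli) (a n : ℕ) where
  edges : ∀ i, i < n → B.E (a + i)
  compat : ∀ i (h : i + 1 < n),
    B.rng (a + i) (edges i (Nat.lt_of_succ_lt h)) = B.src (a + (i + 1)) (edges (i + 1) h)

def SegPath.startV {a n : ℕ} (p : B.SegPath a (n + 1)) : B.V a :=
  B.src a (p.edges 0 (Nat.succ_pos n))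

def SegPath.endV {a n : ℕ} (p : B.SegPath a (n + 1)) : B.V (a + n + 1) :=
  B.rng (a + n) (p.edges n (Nat.lt_succ_self n))

/-- A weight function: nonnegative weights on level-0 vertices and on edges. -/
structure WeightFn (B : Bratteli) where
  w0 : B.V 0 → ℝ
  we : ∀ k, B.E k → ℝ
  nonneg0 : ∀ v, 0 ≤ w0 v
  nonnegE : ∀ k e, 0 ≤ we k e

/-- The product w(s(e₁))·∏ w(eᵢ) along a finite path. -/
def WeightFn.finProd {n : ℕ} (w : B.WeightFn) (p : B.FinPath (n + 1)) : ℝ :=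
  w.w0 p.startV * ∏ i : Fin (n + 1), w.we i (p.edges i i.isLt)

/-- The partial product along an infinite path. -/
def WeightFn.prodPath (w : B.WeightFn) (x : B.Path) (n : ℕ) : ℝ :=
  w.w0 (B.src 0 (x.edges 0)) * ∏ i ∈ Finset.range n, w.we i (x.edges i)

/-- The weight-function axioms (i) path-independence, (ii) unit outgoing mass,
(iii) decay along non-periodic paths. -/
structure IsWeight (w : B.WeightFn) : Prop where
  pathIndep : ∀ n (p q : B.FinPath (n + 1)), p.endV = q.endV → w.finProd p = w.finProd q
  outSum : ∀ k (v : B.V k), (∑ e : B.E k, if B.src k e = v then w.we k e else 0) = 1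
  decay : ∀ x : B.Path, ¬ (tailClass x).Finite →
    Filter.Tendsto (fun n => w.prodPath x n) Filter.atTop (nhds 0)

attribute [ext] Path

def HarmonicAt (g : ∀ k, B.V k → ℝ) (k : ℕ) : Prop :=
  ∀ v, g k v = ∑ e with B.src k e = v, g (k + 1) (B.rng k e)

noncomputable def numPathsTo (B : Bratteli) : ∀ n, B.V n → ℕ
  | 0, _ => 1
  | n + 1, v => ∑ e with B.rng n e = v, B.numPathsTo n (B.src n e)

noncomputable def numPathsFrom (B : Bratteli) : ℕ → ∀ k, B.V k → ℕ
  | 0, _, _ => 1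
  | d + 1, k, v => ∑ e with B.src k e = v, B.numPathsFrom d (k + 1) (B.rng k e)

section PathCounts

open Finset

theorem one_le_numPathsTo : ∀ n (v : B.V n), 1 ≤ B.numPathsTo n v
  | 0, _ => le_rfl
  | n + 1, v => by
    obtain ⟨e, rfl⟩ := B.rngSurj n v
    rw [numPathsTo]
    exact (one_le_numPathsTo n _).trans
      (single_le_sum (f := fun e' => B.numPathsTo n (B.src n e')) (fun _ _ => Nat.zero_le _)
        (mem_filter.2 ⟨mem_univ e, rfl⟩))

theorem one_le_numPathsFrom : ∀ d k (v : B.V k), 1 ≤ B.numPathsFrom d k v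
  | 0, _, _ => le_rfl
  | d + 1, k, v => by
    obtain ⟨e, rfl⟩ := B.srcSurj k v
    rw [numPathsFrom]
    exact (one_le_numPathsFrom d _ _).trans
      (single_le_sum (f := fun e' => B.numPathsFrom d (k + 1) (B.rng k e'))
        (fun _ _ => Nat.zero_le _) (mem_filter.2 ⟨mem_univ e, rfl⟩))

theorem sum_numPathsTo_mul {g : ∀ k, B.V k → ℝ} {n : ℕ} (hg : ∀ k < n, HarmonicAt g k) :
    ∑ v, (B.numPathsTo n v : ℝ) * g n v = ∑ v, g 0 v := by
  induction n with
  | zero => simp [numPathsTo]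
  | succ n ih =>
    set F : B.E n → ℝ := fun e => B.numPathsTo n (B.src n e) * g (n + 1) (B.rng n e)
    calc ∑ v, (B.numPathsTo (n + 1) v : ℝ) * g (n + 1) v
        = ∑ v, ∑ e with B.rng n e = v, F e := by
          refine sum_congr rfl fun v _ => ?_
          rw [numPathsTo, Nat.cast_sum, sum_mul]
          exact sum_congr rfl fun e he => by rw [← (mem_filter.1 he).2]
      _ = ∑ u, ∑ e with B.src n e = u, F e :=
          (sum_fiberwise univ (B.rng n) F).trans (sum_fiberwise univ (B.src n) F).symm
      _ = ∑ u, (B.numPathsTo n u : ℝ) * g n u := by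
          refine sum_congr rfl fun u _ => ?_
          rw [hg n n.lt_succ_self u, mul_sum]
          exact sum_congr rfl fun e he => by rw [← (mem_filter.1 he).2]
      _ = ∑ v, g 0 v := ih fun k hk => hg k (hk.trans n.lt_succ_self)

theorem numPathsTo_mul_le_sum {g : ∀ k, B.V k → ℝ} {n : ℕ} (hg : ∀ k < n, HarmonicAt g k)
    (hnonneg : ∀ v, 0 ≤ g n v) (v : B.V n) :
    (B.numPathsTo n v : ℝ) * g n v ≤ ∑ u, g 0 u := by
  rw [← sum_numPathsTo_mul hg]
  exact single_le_sum (fun u _ => mul_nonneg (Nat.cast_nonneg _) (hnonneg u)) (mem_univ v)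

theorem card_le_numPathsTo (n : ℕ) (v : B.V n) (t : Finset B.Path)
    (hsrc : ∀ y ∈ t, B.src n (y.edges n) = v)
    (hinj : ∀ y ∈ t, ∀ z ∈ t, (∀ k < n, y.edges k = z.edges k) → y = z) :
    #t ≤ B.numPathsTo n v := by
  induction n generalizing t with
  | zero => exact card_le_one.2 fun y hy z hz => hinj y hy z hz fun k hk => absurd hk k.not_lt_zero
  | succ n ih =>
    have hmaps : (t : Set B.Path).MapsTo (fun y => y.edges n)
        ({e | B.rng n e = v} : Finset (B.E n)) := by
      intro y hy
      simpa [y.compat n] using hsrc y hy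
    rw [card_eq_sum_card_fiberwise hmaps, numPathsTo]
    refine sum_le_sum fun e _ => ih _ _ ?_ ?_
    · intro y hy
      rw [(mem_filter.1 hy).2]
    · intro y hy z hz hagree
      refine hinj y (mem_filter.1 hy).1 z (mem_filter.1 hz).1 fun k hk => ?_
      rcases Nat.lt_succ_iff_lt_or_eq.1 hk with hk | rfl
      · exact hagree k hk
      · rw [(mem_filter.1 hy).2, (mem_filter.1 hz).2]

theorem tendsto_numPathsTo_atTop (x : B.Path) (hx : ¬ (tailClass x).Finite) :
    Tendsto (fun n => B.numPathsTo n (B.src n (x.edges n))) atTop atTop := by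
  rw [tendsto_atTop]
  intro M
  obtain ⟨t, hts, rfl⟩ := Set.Infinite.exists_subset_card_eq hx M
  choose! N hN using fun y (hy : y ∈ t) => (hts hy : TailEquiv x y)
  filter_upwards [eventually_ge_atTop (t.sup N)] with n hn
  have hagree : ∀ y ∈ t, ∀ k, n ≤ k → x.edges k = y.edges k :=
    fun y hy k hk => hN y hy k ((le_sup hy).trans (hn.trans hk))
  refine card_le_numPathsTo n _ t (fun y hy => by rw [← hagree y hy n le_rfl]) ?_
  intro y hy z hz hlow
  ext k
  rcases lt_or_ge k n with hk | hk
  · exact hlow k hk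
  · rw [← hagree y hy k hk, ← hagree z hz k hk]


theorem HarmonicAt.of_tendsto {G : ℕ → ∀ k, B.V k → ℝ} {g : ∀ k, B.V k → ℝ} {l : Filter ℕ}
    [l.NeBot] {k : ℕ} (hlim : Tendsto G l (𝓝 g)) (hG : ∀ᶠ n in l, HarmonicAt (G n) k) :
    HarmonicAt g k := by
  have hcoord : ∀ j (v : B.V j), Tendsto (fun n => G n j v) l (𝓝 (g j v)) :=
    fun j v => tendsto_pi_nhds.1 (tendsto_pi_nhds.1 hlim j) v
  intro v
  refine tendsto_nhds_unique_of_eventuallyEq (hcoord k v)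
    (tendsto_finsetSum _ fun e _ => hcoord (k + 1) (B.rng k e)) ?_
  exact hG.mono fun n hn => hn v

theorem harmonicAt_numPathsFrom_sub {n k : ℕ} (hk : k < n) :
    HarmonicAt (fun j v => (B.numPathsFrom (n - j) j v : ℝ)) k := by
  intro v
  obtain ⟨d, hd⟩ : ∃ d, n - k = d + 1 := ⟨n - k - 1, by omega⟩
  have hd' : n - (k + 1) = d := by omega
  simp only [hd, hd', numPathsFrom, Nat.cast_sum]

theorem numPathsFrom_sub_le_sum (n k : ℕ) (v : B.V k) :
    (B.numPathsFrom (n - k) k v : ℝ) ≤ ∑ u, (B.numPathsFrom n 0 u : ℝ) := by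
  rcases le_or_gt k n with hkn | hnk
  · calc (B.numPathsFrom (n - k) k v : ℝ)
        ≤ B.numPathsTo k v * B.numPathsFrom (n - k) k v :=
          le_mul_of_one_le_left (Nat.cast_nonneg _) (by exact_mod_cast one_le_numPathsTo k v)
      _ ≤ ∑ u, (B.numPathsFrom n 0 u : ℝ) :=
          numPathsTo_mul_le_sum (g := fun j v => (B.numPathsFrom (n - j) j v : ℝ))
            (fun j hj => harmonicAt_numPathsFrom_sub (hj.trans_le hkn))
            (fun _ => Nat.cast_nonneg _) v
  · obtain ⟨u⟩ := B.neV 0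
    rw [Nat.sub_eq_zero_of_le hnk.le, numPathsFrom, Nat.cast_one]
    exact (by exact_mod_cast one_le_numPathsFrom n 0 u : (1 : ℝ) ≤ _).trans
      (single_le_sum (fun u _ => Nat.cast_nonneg _) (mem_univ u))

/-- For `k ≥ n` the truncated subtraction makes the numerator `1`, the empty path. -/
noncomputable def pathShare (B : Bratteli) (n k : ℕ) (v : B.V k) : ℝ :=
  B.numPathsFrom (n - k) k v / ∑ u, (B.numPathsFrom n 0 u : ℝ)

theorem sum_numPathsFrom_pos (n : ℕ) : 0 < ∑ u, (B.numPathsFrom n 0 u : ℝ) :=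
  sum_pos (fun u _ => by exact_mod_cast one_le_numPathsFrom n 0 u) univ_nonempty

theorem pathShare_mem_Icc (n k : ℕ) (v : B.V k) : B.pathShare n k v ∈ Set.Icc 0 1 :=
  ⟨div_nonneg (Nat.cast_nonneg _) (sum_numPathsFrom_pos n).le,
    div_le_one_of_le₀ (numPathsFrom_sub_le_sum n k v) (sum_numPathsFrom_pos n).le⟩

theorem harmonicAt_pathShare {n k : ℕ} (hk : k < n) : HarmonicAt (B.pathShare n) k := by
  intro v
  simp only [pathShare, harmonicAt_numPathsFrom_sub hk v, sum_div]

theorem sum_pathShare_zero (n : ℕ) : ∑ v, B.pathShare n 0 v = 1 := by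
  simp only [pathShare, Nat.sub_zero, ← sum_div]
  exact div_self (sum_numPathsFrom_pos n).ne'

theorem exists_nonneg_harmonic (B : Bratteli) : ∃ g : ∀ k, B.V k → ℝ,
    (∀ k v, 0 ≤ g k v) ∧ (∀ k, HarmonicAt g k) ∧ ∑ v, g 0 v = 1 := by
  have hcompact :
      IsCompact (Set.univ.pi fun k => Set.univ.pi fun (_ : B.V k) => Set.Icc (0 : ℝ) 1) :=
    isCompact_univ_pi fun _ => isCompact_univ_pi fun _ => isCompact_Icc
  obtain ⟨g, hg, φ, hφ, hlim⟩ := hcompact.tendsto_subseq (x := B.pathShare)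
    fun n k _ v _ => pathShare_mem_Icc n k v
  refine ⟨g, fun k v => (hg k trivial v trivial).1, fun k => ?_, ?_⟩
  · exact HarmonicAt.of_tendsto hlim
      ((hφ.tendsto_atTop.eventually_gt_atTop k).mono fun n hn => harmonicAt_pathShare hn)
  · have hsum := tendsto_finsetSum univ fun v _ => tendsto_pi_nhds.1 (tendsto_pi_nhds.1 hlim 0) v
    simp only [Function.comp_apply, sum_pathShare_zero] at hsum
    exact tendsto_nhds_unique hsum tendsto_const_nhds

end PathCounts

def FinPath.init {n : ℕ} (p : B.FinPath (n + 1)) : B.FinPath n :=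
  ⟨fun k hk => p.edges k (hk.trans n.lt_succ_self), fun k h => p.compat k (h.trans n.lt_succ_self)⟩

theorem WeightFn.finProd_succ (w : B.WeightFn) {n : ℕ} (p : B.FinPath (n + 2)) :
    w.finProd p = w.finProd p.init * w.we (n + 1) (p.edges (n + 1) (n + 1).lt_succ_self) := by
  rw [WeightFn.finProd, WeightFn.finProd, Fin.prod_univ_castSucc, mul_assoc]
  rfl

theorem WeightFn.prodPath_succ (w : B.WeightFn) (x : B.Path) (n : ℕ) :
    w.prodPath x (n + 1) = w.prodPath x n * w.we n (x.edges n) := by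
  rw [WeightFn.prodPath, WeightFn.prodPath, Finset.prod_range_succ, mul_assoc]

section HarmonicWeight

open Finset

variable {g : ∀ k, B.V k → ℝ}

noncomputable def edgeWeight (g : ∀ k, B.V k → ℝ) (k : ℕ) (e : B.E k) : ℝ :=
  if g k (B.src k e) = 0 then ((#{e' | B.src k e' = B.src k e} : ℕ) : ℝ)⁻¹
  else g (k + 1) (B.rng k e) / g k (B.src k e)

theorem edgeWeight_nonneg (hg : ∀ k v, 0 ≤ g k v) (k : ℕ) (e : B.E k) : 0 ≤ edgeWeight g k e := by
  unfold edgeWeight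
  split_ifs
  · positivity
  · exact div_nonneg (hg _ _) (hg _ _)

theorem HarmonicAt.apply_rng_eq_zero {k : ℕ} (h : HarmonicAt g k) (hg : ∀ v, 0 ≤ g (k + 1) v)
    {e : B.E k} (he : g k (B.src k e) = 0) : g (k + 1) (B.rng k e) = 0 := by
  have hsum := h (B.src k e)
  rw [he, eq_comm, sum_eq_zero_iff_of_nonneg fun _ _ => hg _] at hsum
  exact hsum e (mem_filter.2 ⟨mem_univ e, rfl⟩)

theorem mul_edgeWeight {k : ℕ} (h : HarmonicAt g k) (hg : ∀ v, 0 ≤ g (k + 1) v) (e : B.E k) :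
    g k (B.src k e) * edgeWeight g k e = g (k + 1) (B.rng k e) := by
  unfold edgeWeight
  split_ifs with he
  · rw [he, zero_mul, h.apply_rng_eq_zero hg he]
  · exact mul_div_cancel₀ _ he

theorem sum_edgeWeight {k : ℕ} (h : HarmonicAt g k) (v : B.V k) :
    ∑ e with B.src k e = v, edgeWeight g k e = 1 := by
  by_cases hv : g k v = 0
  · have hcard : 0 < #{e | B.src k e = v} := by
      obtain ⟨e, rfl⟩ := B.srcSurj k v
      exact card_pos.2 ⟨e, mem_filter.2 ⟨mem_univ e, rfl⟩⟩
    rw [sum_congr rfl fun e he => by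
      rw [edgeWeight, (mem_filter.1 he).2, if_pos hv], sum_const, nsmul_eq_mul]
    exact mul_inv_cancel₀ (Nat.cast_ne_zero.2 hcard.ne')
  · rw [sum_congr rfl fun e he => by
      rw [edgeWeight, (mem_filter.1 he).2, if_neg hv], ← sum_div, ← h v, div_self hv]

variable (hg : ∀ k v, 0 ≤ g k v)

noncomputable def toWeightFn : B.WeightFn := ⟨g 0, edgeWeight g, hg 0, edgeWeight_nonneg hg⟩

theorem prodPath_toWeightFn (hharm : ∀ k, HarmonicAt g k) (x : B.Path) (n : ℕ) :
    (toWeightFn hg).prodPath x n = g n (B.src n (x.edges n)) := by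
  induction n with
  | zero => simp [WeightFn.prodPath, toWeightFn]
  | succ n ih =>
    rw [WeightFn.prodPath_succ, ih]
    exact (mul_edgeWeight (hharm n) (hg (n + 1)) (x.edges n)).trans (congrArg _ (x.compat n))

theorem finProd_toWeightFn (hharm : ∀ k, HarmonicAt g k) {n : ℕ} (p : B.FinPath (n + 1)) :
    (toWeightFn hg).finProd p = g (n + 1) p.endV := by
  induction n with
  | zero =>
    rw [WeightFn.finProd, Fin.prod_univ_one]
    exact mul_edgeWeight (hharm 0) (hg 1) _
  | succ n ih =>
    have hinit : p.init.endV = B.src (n + 1) (p.edges (n + 1) (n + 1).lt_succ_self) :=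
      p.compat n (n + 1).lt_succ_self
    rw [WeightFn.finProd_succ, ih, hinit]
    exact mul_edgeWeight (hharm _) (hg _) _

theorem tendsto_prodPath_toWeightFn (hharm : ∀ k, HarmonicAt g k) (hsum : ∑ v, g 0 v = 1)
    (x : B.Path) (hx : ¬ (tailClass x).Finite) :
    Tendsto ((toWeightFn hg).prodPath x) atTop (𝓝 0) := by
  refine squeeze_zero (fun n => ?_) (fun n => ?_)
    (tendsto_natCast_atTop_atTop.comp (tendsto_numPathsTo_atTop x hx)).inv_tendsto_atTop
  · rw [prodPath_toWeightFn hg hharm]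
    exact hg _ _
  · have hpos : (0 : ℝ) < B.numPathsTo n (B.src n (x.edges n)) := by
      exact_mod_cast one_le_numPathsTo n _
    rw [prodPath_toWeightFn hg hharm, Pi.inv_apply, Function.comp_apply, ← one_div,
      le_div_iff₀ hpos, mul_comm, ← hsum]
    exact numPathsTo_mul_le_sum (fun k _ => hharm k) (hg n) _

theorem isWeight_toWeightFn (hharm : ∀ k, HarmonicAt g k) (hsum : ∑ v, g 0 v = 1) :
    IsWeight (toWeightFn hg) where
  pathIndep n p q h := by rw [finProd_toWeightFn hg hharm, finProd_toWeightFn hg hharm, h]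
  outSum k v := by
    rw [← sum_filter]
    exact sum_edgeWeight (hharm k) v
  decay := tendsto_prodPath_toWeightFn hg hharm hsum

end HarmonicWeight

/-- Every Bratteli diagram admits a probability weight function. -/
theorem exists_probability_weight_function (B : Bratteli) :
    ∃ w : B.WeightFn, IsWeight w ∧ ∑ v : B.V 0, w.w0 v = 1 := by
  obtain ⟨g, hg, hharm, hsum⟩ := exists_nonneg_harmonic B
  exact ⟨toWeightFn hg, isWeight_toWeightFn hg hharm hsum, hsum⟩

end Bratteli
end

section
/- A finite tail equivalence class in the path space of an ordered Bratteli diagram has a unique maximal element and a unique minimal element, and such a class is closed in X_B. -/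
open Classical Filter Topology MeasureTheory

namespace Bratteli

variable {B : Bratteli}

/-- The Vershik (reverse-lexicographic) strict order on tail-equivalent paths, induced by a
labelling `lab` which is injective on each fiber r⁻¹(v): compare at the largest index where
the two paths differ. -/
def OrdLt (lab : ∀ k, B.E k → ℕ) (x y : B.Path) : Prop :=
  ∃ k, x.edges k ≠ y.edges k ∧ (∀ i, k < i → x.edges i = y.edges i) ∧
    lab k (x.edges k) < lab k (y.edges k)

lemma path_ext {y z : B.Path} (h : y.edges = z.edges) : y = z := by
  cases y; cases z; cases h; rfl

lemma ordLt_irrefl (lab : ∀ k, B.E k → ℕ) (a : B.Path) : ¬ OrdLt lab a a := by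
  rintro ⟨k, hk, -, -⟩; exact hk rfl

lemma ordLt_trans (lab : ∀ k, B.E k → ℕ) {a b c : B.Path}
    (h1 : OrdLt lab a b) (h2 : OrdLt lab b c) : OrdLt lab a c := by
  obtain ⟨k1, hne1, hagr1, hlt1⟩ := h1
  obtain ⟨k2, hne2, hagr2, hlt2⟩ := h2
  rcases Nat.lt_trichotomy k1 k2 with h | h | h
  · refine ⟨k2, ?_, ?_, ?_⟩
    · rw [hagr1 k2 h]; exact hne2
    · intro i hi; rw [hagr1 i (h.trans hi), hagr2 i hi]
    · rw [hagr1 k2 h]; exact hlt2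
  · subst h
    refine ⟨k1, ?_, ?_, hlt1.trans hlt2⟩
    · intro he; rw [he] at hlt1; exact absurd (hlt1.trans hlt2) (lt_irrefl _)
    · intro i hi; rw [hagr1 i hi, hagr2 i hi]
  · refine ⟨k1, ?_, ?_, ?_⟩
    · rw [← hagr2 k1 h]; exact hne1
    · intro i hi; rw [hagr1 i hi, hagr2 i (h.trans hi)]
    · rw [← hagr2 k1 h]; exact hlt1

/-- Trichotomy of `OrdLt` on tail-equivalent distinct paths. -/
lemma ordLt_trichotomy (lab : ∀ k, B.E k → ℕ)
    (hlab : ∀ k (e f : B.E k), B.rng k e = B.rng k f → lab k e = lab k f → e = f)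
    {y z : B.Path} (h : TailEquiv y z) (hne : y ≠ z) :
    OrdLt lab y z ∨ OrdLt lab z y := by
  obtain ⟨N, hN⟩ := h
  have hD : ∃ k, y.edges k ≠ z.edges k := by
    by_contra h'
    push_neg at h'
    exact hne (path_ext (funext h'))
  have hbd : ∀ k, y.edges k ≠ z.edges k → k < N := by
    intro k hk
    by_contra hle
    exact hk (hN k (le_of_not_gt hle))
  classical
  set D := (Finset.range N).filter (fun k => y.edges k ≠ z.edges k) with hDdef
  have hDne : D.Nonempty := by
    obtain ⟨k, hk⟩ := hD
    exact ⟨k, Finset.mem_filter.mpr ⟨Finset.mem_range.mpr (hbd k hk), hk⟩⟩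
  set k := D.max' hDne with hkdef
  have hk_mem := D.max'_mem hDne
  have hkd : y.edges k ≠ z.edges k := (Finset.mem_filter.mp hk_mem).2
  have hgt : ∀ i, k < i → y.edges i = z.edges i := by
    intro i hi
    by_contra hne'
    have hmem : i ∈ D := Finset.mem_filter.mpr ⟨Finset.mem_range.mpr (hbd i hne'), hne'⟩
    exact absurd (D.le_max' i hmem) (not_le.mpr hi)
  have hrng : B.rng k (y.edges k) = B.rng k (z.edges k) := by
    rw [y.compat k, z.compat k, hgt (k + 1) (Nat.lt_succ_self k)]
  have hlabne : lab k (y.edges k) ≠ lab k (z.edges k) := fun h =>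
    hkd (hlab k _ _ hrng h)
  rcases lt_or_gt_of_ne hlabne with h | h
  · exact Or.inl ⟨k, hkd, hgt, h⟩
  · exact Or.inr ⟨k, hkd.symm, fun i hi => (hgt i hi).symm, h⟩

/-- In a finite nonempty set, an irreflexive transitive relation has a maximal element. -/
lemma exists_max_rel {α : Type*} (r : α → α → Prop) (irr : ∀ a, ¬ r a a)
    (tr : ∀ a b c, r a b → r b c → r a c) :
    ∀ (t : Finset α), t.Nonempty → ∃ m ∈ t, ∀ z ∈ t, ¬ r m z := by
  intro t
  induction t using Finset.cons_induction with
  | empty => intro h; exact absurd h (by simp)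
  | cons a s ha ih =>
    intro _
    rcases s.eq_empty_or_nonempty with rfl | hs
    · refine ⟨a, by simp, ?_⟩
      intro z hz
      simp only [Finset.cons_empty, Finset.mem_singleton] at hz
      subst hz; exact irr z
    · obtain ⟨m, hm, hmax⟩ := ih hs
      by_cases hma : r m a
      · refine ⟨a, Finset.mem_cons_self .., ?_⟩
        intro z hz hr
        rcases Finset.mem_cons.mp hz with rfl | hz
        · exact irr z hr
        · exact hmax z hz (tr m a z hma hr)
      · refine ⟨m, Finset.mem_cons_of_mem hm, ?_⟩
        intro z hz hr
        rcases Finset.mem_cons.mp hz with rfl | hz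
        · exact hma hr
        · exact hmax z hz hr

/-- a finite tail equivalence class in the path space of an ordered Bratteli
diagram has a unique maximal element and a unique minimal element, and is closed. -/
theorem finite_tail_class_unique_max_min_closed (B : Bratteli)
    (lab : ∀ k, B.E k → ℕ)
    (hlab : ∀ k (e f : B.E k), B.rng k e = B.rng k f → lab k e = lab k f → e = f)
    (x : B.Path) (hfin : (tailClass x).Finite) :
    (∃! y, y ∈ tailClass x ∧ ∀ z ∈ tailClass x, ¬ OrdLt lab y z) ∧
    (∃! y, y ∈ tailClass x ∧ ∀ z ∈ tailClass x, ¬ OrdLt lab z y) ∧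
    IsClosed (tailClass x) := by
  have hxx : x ∈ tailClass x := ⟨0, fun _ _ => rfl⟩
  have hte : ∀ {y z : B.Path}, y ∈ tailClass x → z ∈ tailClass x → TailEquiv y z := by
    rintro y z ⟨N1, h1⟩ ⟨N2, h2⟩
    exact ⟨max N1 N2, fun k hk =>
      ((h1 k (le_trans (le_max_left _ _) hk)).symm).trans (h2 k (le_trans (le_max_right _ _) hk))⟩
  have htri : ∀ y ∈ tailClass x, ∀ z ∈ tailClass x, y ≠ z →
      OrdLt lab y z ∨ OrdLt lab z y := fun y hy z hz hne =>
    ordLt_trichotomy lab hlab (hte hy hz) hne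
  classical
  set t := hfin.toFinset with htdef
  have hmemt : ∀ y : B.Path, y ∈ t ↔ y ∈ tailClass x := fun y => hfin.mem_toFinset
  have htne : t.Nonempty := ⟨x, (hmemt x).mpr hxx⟩
  refine ⟨?_, ?_, ?_⟩
  · -- unique maximal element
    obtain ⟨m, hm, hmax⟩ := exists_max_rel (OrdLt lab) (ordLt_irrefl lab)
      (fun a b c => ordLt_trans lab) t htne
    refine ⟨m, ⟨(hmemt m).mp hm, fun z hz => hmax z ((hmemt z).mpr hz)⟩, ?_⟩
    rintro y ⟨hy, hymax⟩
    by_contra hne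
    rcases htri y hy m ((hmemt m).mp hm) hne with h | h
    · exact hymax m ((hmemt m).mp hm) h
    · exact hmax y ((hmemt y).mpr hy) h
  · -- unique minimal element
    obtain ⟨m, hm, hmin⟩ := exists_max_rel (fun a b => OrdLt lab b a) (ordLt_irrefl lab)
      (fun a b c hab hbc => ordLt_trans lab hbc hab) t htne
    refine ⟨m, ⟨(hmemt m).mp hm, fun z hz => hmin z ((hmemt z).mpr hz)⟩, ?_⟩
    rintro y ⟨hy, hymin⟩
    by_contra hne
    rcases htri y hy m ((hmemt m).mp hm) hne with h | h
    · exact hmin y ((hmemt y).mpr hy) h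
    · exact hymin m ((hmemt m).mp hm) h
  · -- the class is closed
    have hinj : Function.Injective (Path.edges : B.Path → ∀ k, B.E k) := by
      intro p q h; exact path_ext h
    letI : ∀ k, TopologicalSpace (B.E k) := fun _ => ⊥
    haveI : ∀ k, DiscreteTopology (B.E k) := fun _ => ⟨rfl⟩
    have himg : IsClosed (Path.edges '' tailClass x : Set (∀ k, B.E k)) :=
      (hfin.image _).isClosed
    have hpre : tailClass x = Path.edges ⁻¹' (Path.edges '' tailClass x) :=
      (Set.preimage_image_eq _ hinj).symm
    rw [hpre]
    exact himg.preimage continuous_induced_dom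

end Bratteli
end

section
/- Let B be a Bratteli diagram whose tail equivalence relation is transitive, meaning some path e* has dense tail equivalence class in X_B. Then the metamour function is uniformly bounded at level 0: there exists ϖ ∈ ℕ such that for any two vertices v, w ∈ V_0 there exist paths p, q of length at most ϖ from v and w respectively to a common vertex, i.e., Δ_B^+(0) = max_{v,w ∈ V_0} Δ_B^0(v,w) < ∞. -/
open Classical Filter Topology MeasureTheory

namespace Bratteli

variable {B : Bratteli}

/-! Density of the tail class of `x` means it meets every cylinder set, so every level-0 vertex
`v` is the source of a path that eventually follows `x`. As `V 0` is finite, a single level `N`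
works for all of them, and the initial segments of these paths through level `N` all end at the
range vertex of `x.edges N`. -/

noncomputable def edgesFrom (B : Bratteli) (v : B.V 0) : ∀ k, B.E k
  | 0 => (B.srcSurj 0 v).choose
  | k + 1 => (B.srcSurj (k + 1) (B.rng k (edgesFrom B v k))).choose

theorem exists_path_src_eq (v : B.V 0) : ∃ y : B.Path, B.src 0 (y.edges 0) = v :=
  ⟨⟨edgesFrom B v, fun k => ((B.srcSurj (k + 1) (B.rng k (edgesFrom B v k))).choose_spec).symm⟩,
    (B.srcSurj 0 v).choose_spec⟩

def Path.truncate (x : B.Path) (n : ℕ) : B.FinPath n :=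
  ⟨fun k _ => x.edges k, fun k _ => x.compat k⟩

theorem isOpen_setOf_edges_mem (k : ℕ) (s : Set (B.E k)) : IsOpen {y : B.Path | y.edges k ∈ s} := by
  let _ : ∀ k, TopologicalSpace (B.E k) := fun _ => ⊥
  have : DiscreteTopology (B.E k) := ⟨rfl⟩
  exact (isOpen_discrete s).preimage
    ((continuous_apply (A := fun k => B.E k) k).comp continuous_induced_dom)

theorem exists_tailEquiv_src_eq_of_dense {x : B.Path} (hx : Dense (tailClass x)) (v : B.V 0) :
    ∃ y, TailEquiv x y ∧ B.src 0 (y.edges 0) = v :=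
  hx.exists_mem_open (isOpen_setOf_edges_mem 0 {e | B.src 0 e = v}) (exists_path_src_eq v)

theorem exists_level_edges_eq_of_dense {x : B.Path} (hx : Dense (tailClass x)) :
    ∃ N, ∀ v : B.V 0, ∃ y : B.Path, B.src 0 (y.edges 0) = v ∧ y.edges N = x.edges N := by
  have h_each : ∀ v : B.V 0, ∀ᶠ N in atTop, ∃ y : B.Path,
      B.src 0 (y.edges 0) = v ∧ y.edges N = x.edges N := by
    intro v
    obtain ⟨y, ⟨M, hM⟩, hyv⟩ := exists_tailEquiv_src_eq_of_dense hx v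
    exact eventually_atTop.2 ⟨M, fun N hN => ⟨y, hyv, (hM N hN).symm⟩⟩
  exact (eventually_all.2 h_each).exists

/-- if some tail equivalence class is dense in X_B (transitivity), then the
metamour function is uniformly bounded at level 0: there is ϖ such that any two level-0
vertices are connected by paths of length at most ϖ to a common vertex. -/
theorem transitive_implies_metamour_bounded (B : Bratteli)
    (htrans : ∃ x : B.Path, Dense (tailClass x)) :
    ∃ ϖ : ℕ, ∀ v w : B.V 0, ∃ n ≤ ϖ, ∃ p q : B.FinPath (n + 1),
      p.startV = v ∧ q.startV = w ∧ p.endV = q.endV := by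
  obtain ⟨x, hx⟩ := htrans
  obtain ⟨N, hN⟩ := exists_level_edges_eq_of_dense hx
  choose y hy_src hy_edge using hN
  refine ⟨N, fun v w => ⟨N, le_rfl, (y v).truncate _, (y w).truncate _, hy_src v, hy_src w, ?_⟩⟩
  change B.rng N ((y v).edges N) = B.rng N ((y w).edges N)
  rw [hy_edge, hy_edge]

end Bratteli
end

section
/- If the tail equivalence relation of a Bratteli diagram B is minimal (some class is dense and there is no finite class), then any invariant probability weight function w on B assigns strictly positive weight to every vertex, provided w is not identically zero on V_0: that is, if w(v) = 0 for some vertex v at some level, then w(v') = 0 for all vertices v' at level 0, contradicting ∑_{v ∈ V_0} w(v) = 1. Hence every minimal Bratteli diagram's probability weight function is positive on all vertices. -/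
open Classical Filter Topology MeasureTheory

namespace Bratteli

variable {B : Bratteli}

/-- Truncation of an infinite path to a finite path. -/
def Path.trunc (x : B.Path) (n : ℕ) : B.FinPath n :=
  ⟨fun k _ => x.edges k, fun k _ => x.compat k⟩

lemma finProd_trunc (w : B.WeightFn) (x : B.Path) (n : ℕ) :
    w.finProd (x.trunc (n + 1)) = w.prodPath x (n + 1) := by
  have h : w.finProd (x.trunc (n + 1)) =
      w.w0 (B.src 0 (x.edges 0)) * ∏ i : Fin (n + 1), w.we i (x.edges i) := rfl
  rw [h, WeightFn.prodPath]
  exact congrArg (fun t => w.w0 (B.src 0 (x.edges 0)) * t)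
    (Fin.prod_univ_eq_prod_range (fun i => w.we i (x.edges i)) (n + 1))

lemma prodPath_eq_of_agree {w : B.WeightFn} (hw : IsWeight w) (x y : B.Path)
    (N m : ℕ) (hm : N < m) (hagree : ∀ k, N ≤ k → x.edges k = y.edges k) :
    w.prodPath x m = w.prodPath y m := by
  obtain ⟨M, rfl⟩ : ∃ M, m = M + 1 := ⟨m - 1, by omega⟩
  rw [← finProd_trunc, ← finProd_trunc]
  exact hw.pathIndep M _ _ (congrArg (B.rng M) (hagree M (by omega)))

lemma exists_pos_edge {w : B.WeightFn} (hw : IsWeight w) (k : ℕ) (v : B.V k) :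
    ∃ e : B.E k, B.src k e = v ∧ 0 < w.we k e := by
  by_contra hc
  push_neg at hc
  have hz : (∑ e : B.E k, if B.src k e = v then w.we k e else 0) = 0 := by
    apply Finset.sum_eq_zero
    intro e _
    split_ifs with he
    · exact le_antisymm (hc e he) (w.nonnegE k e)
    · rfl
  have := hw.outSum k v
  rw [hz] at this
  norm_num at this

/-- A sequence of edges, each of positive weight, starting at `v0`. -/
noncomputable def posEdges {w : B.WeightFn} (hw : IsWeight w) (v0 : B.V 0) :
    ∀ k, B.E k := fun k =>
  Nat.rec (Classical.choose (exists_pos_edge hw 0 v0))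
    (fun k e => Classical.choose (exists_pos_edge hw (k + 1) (B.rng k e))) k

lemma posEdges_src {w : B.WeightFn} (hw : IsWeight w) (v0 : B.V 0) :
    B.src 0 (posEdges hw v0 0) = v0 :=
  (Classical.choose_spec (exists_pos_edge hw 0 v0)).1

lemma posEdges_compat {w : B.WeightFn} (hw : IsWeight w) (v0 : B.V 0) (k : ℕ) :
    B.rng k (posEdges hw v0 k) = B.src (k + 1) (posEdges hw v0 (k + 1)) :=
  (Classical.choose_spec (exists_pos_edge hw (k + 1) (B.rng k (posEdges hw v0 k)))).1.symm

lemma posEdges_pos {w : B.WeightFn} (hw : IsWeight w) (v0 : B.V 0) (k : ℕ) :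
    0 < w.we k (posEdges hw v0 k) := by
  cases k with
  | zero => exact (Classical.choose_spec (exists_pos_edge hw 0 v0)).2
  | succ k =>
      exact (Classical.choose_spec
        (exists_pos_edge hw (k + 1) (B.rng k (posEdges hw v0 k)))).2

/-- The infinite path built from `posEdges`. -/
noncomputable def posPath {w : B.WeightFn} (hw : IsWeight w) (v0 : B.V 0) : B.Path :=
  ⟨posEdges hw v0, posEdges_compat hw v0⟩

lemma posPath_prod_pos {w : B.WeightFn} (hw : IsWeight w) (v0 : B.V 0)
    (hv0 : 0 < w.w0 v0) (m : ℕ) : 0 < w.prodPath (posPath hw v0) m := by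
  unfold WeightFn.prodPath posPath
  apply mul_pos
  · simpa [posEdges_src hw v0] using hv0
  · exact Finset.prod_pos fun i _ => posEdges_pos hw v0 i

/-- Extension of a finite path to a sequence of edges. -/
noncomputable def extEdges {n : ℕ} (p : B.FinPath (n + 1)) : ∀ k, B.E k := fun k =>
  Nat.rec (p.edges 0 (Nat.succ_pos n))
    (fun k e => if h : k + 1 < n + 1 then p.edges (k + 1) h
      else Classical.choose (B.srcSurj (k + 1) (B.rng k e))) k

lemma extEdges_agree {n : ℕ} (p : B.FinPath (n + 1)) :
    ∀ k (h : k < n + 1), extEdges p k = p.edges k h := by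
  intro k
  induction k with
  | zero => intro h; rfl
  | succ k ih =>
      intro h
      show (if h' : k + 1 < n + 1 then p.edges (k + 1) h'
        else Classical.choose (B.srcSurj (k + 1) (B.rng k (extEdges p k)))) = p.edges (k + 1) h
      rw [dif_pos h]

lemma extEdges_compat {n : ℕ} (p : B.FinPath (n + 1)) (k : ℕ) :
    B.rng k (extEdges p k) = B.src (k + 1) (extEdges p (k + 1)) := by
  show B.rng k (extEdges p k) = B.src (k + 1)
    (if h' : k + 1 < n + 1 then p.edges (k + 1) h'
      else Classical.choose (B.srcSurj (k + 1) (B.rng k (extEdges p k))))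
  by_cases h : k + 1 < n + 1
  · rw [dif_pos h, extEdges_agree p k (Nat.lt_of_succ_lt h)]
    exact p.compat k h
  · rw [dif_neg h]
    exact (Classical.choose_spec (B.srcSurj (k + 1) (B.rng k (extEdges p k)))).symm

/-- The infinite path extending a finite path. -/
noncomputable def extPath {n : ℕ} (p : B.FinPath (n + 1)) : B.Path :=
  ⟨extEdges p, extEdges_compat p⟩

lemma isOpen_cylinder {n : ℕ} (p : B.FinPath (n + 1)) :
    IsOpen {x : B.Path | ∀ i (h : i < n + 1), x.edges i = p.edges i h} := by
  letI : ∀ k, TopologicalSpace (B.E k) := fun _ => ⊥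
  haveI : ∀ k, DiscreteTopology (B.E k) := fun _ => ⟨rfl⟩
  have hcont : ∀ i : ℕ, Continuous fun x : B.Path => x.edges i := fun i =>
    (continuous_apply i).comp continuous_induced_dom
  have hU : {x : B.Path | ∀ i (h : i < n + 1), x.edges i = p.edges i h} =
      ⋂ i : Fin (n + 1), {x : B.Path | x.edges i = p.edges i i.isLt} := by
    ext x
    simp only [Set.mem_iInter, Set.mem_setOf_eq]
    exact ⟨fun h i => h i i.isLt, fun h i hi => h ⟨i, hi⟩⟩
  rw [hU]
  exact isOpen_iInter_of_finite fun i =>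
    (isOpen_discrete {p.edges i i.isLt}).preimage (hcont i)

/-- if the tail equivalence relation is minimal (every class is dense and no
class is finite), then any probability weight function is strictly positive on all vertices:
positive on level-0 vertices and with positive product along every finite path. -/
theorem minimal_implies_weight_positive (B : Bratteli)
    (hdense : ∀ x : B.Path, Dense (tailClass x))
    (hnoper : ∀ x : B.Path, ¬ (tailClass x).Finite)
    (w : B.WeightFn) (hw : IsWeight w) (hprob : ∑ v : B.V 0, w.w0 v = 1) :
    (∀ v : B.V 0, 0 < w.w0 v) ∧ ∀ n (p : B.FinPath (n + 1)), 0 < w.finProd p := by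
  have key : ∀ n (p : B.FinPath (n + 1)), 0 < w.finProd p := by
    intro n p
    have hnn : 0 ≤ w.finProd p :=
      mul_nonneg (w.nonneg0 _) (Finset.prod_nonneg fun i _ => w.nonnegE _ _)
    rcases hnn.lt_or_eq with h | h
    · exact h
    exfalso
    obtain ⟨v0, hv0⟩ : ∃ v0 : B.V 0, 0 < w.w0 v0 := by
      by_contra hc
      push_neg at hc
      have hzero : ∑ v : B.V 0, w.w0 v = 0 :=
        Finset.sum_eq_zero fun v _ => le_antisymm (hc v) (w.nonneg0 v)
      rw [hprob] at hzero
      norm_num at hzero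
    obtain ⟨y, hy_tail, hy_mem⟩ := (hdense (posPath hw v0)).exists_mem_open
      (isOpen_cylinder p) ⟨extPath p, fun i hi => extEdges_agree p i hi⟩
    obtain ⟨N, hN⟩ := hy_tail
    have h1 : w.prodPath (posPath hw v0) (n + 1 + N) = w.prodPath y (n + 1 + N) :=
      prodPath_eq_of_agree hw _ y N _ (by omega) (fun k hk => hN k hk)
    have h2 : w.prodPath y (n + 1) = w.finProd p := by
      unfold WeightFn.prodPath WeightFn.finProd FinPath.startV
      rw [← Fin.prod_univ_eq_prod_range (fun i => w.we i (y.edges i))]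
      rw [hy_mem 0 (Nat.succ_pos n)]
      congr 1
      exact Finset.prod_congr rfl fun i _ => by rw [hy_mem i i.isLt]
    have h3 : w.prodPath y (n + 1 + N) = 0 := by
      have hsplit : w.prodPath y ((n + 1) + N) =
          w.prodPath y (n + 1) *
            ∏ i ∈ Finset.range N, w.we (n + 1 + i) (y.edges (n + 1 + i)) := by
        unfold WeightFn.prodPath
        rw [Finset.prod_range_add, mul_assoc]
      rw [hsplit, h2, ← h, zero_mul]
    have h4 := posPath_prod_pos hw v0 hv0 (n + 1 + N)
    rw [h1, h3] at h4
    exact lt_irrefl 0 h4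
  refine ⟨?_, key⟩
  intro v
  obtain ⟨e, he⟩ := B.srcSurj 0 v
  let p : B.FinPath 1 := ⟨fun k h => match k, h with | 0, _ => e,
    fun k h => absurd h (by omega)⟩
  have hstart : p.startV = v := he
  have hk := key 0 p
  rcases (w.nonneg0 v).lt_or_eq with hv | hv
  · exact hv
  · exfalso
    have hfp : w.finProd p = 0 := by
      unfold WeightFn.finProd
      rw [hstart, ← hv, zero_mul]
    rw [hfp] at hk
    exact lt_irrefl 0 hk

end Bratteli
end

section
/- For each n ∈ ℕ, the set 𝔛_n of bi-infinite Bratteli diagrams B whose transition matrices F_k differ from the 1×1 matrix (2) for all k ≥ n is nowhere dense in the space ℶ of bi-infinite Bratteli diagrams with its cylinder topology. -/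
open Filter Topology

/-- A nonnegative-integer matrix of arbitrary (finite) size. -/
abbrev Mat := Σ m n : ℕ, Matrix (Fin m) (Fin n) ℕ

instance : TopologicalSpace Mat := ⊥
instance : DiscreteTopology Mat := ⟨rfl⟩

/-- Dimension compatibility for a bi-infinite sequence of transition matrices
(F_k is |V_k| × |V_{k-1}| for k ≥ 1, and the negative part is transposed; index 0 unused). -/
def BethCompat (f : ℤ → Mat) : Prop :=
  (∀ k : ℤ, 1 ≤ k → (f k).1 = (f (k + 1)).2.1) ∧
  (∀ k : ℤ, k ≤ -1 → (f k).2.1 = (f (k - 1)).1) ∧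
  (f 1).2.1 = (f (-1)).1

/-- The space ℶ of bi-infinite Bratteli diagrams, with the cylinder (product of discrete)
topology. -/
abbrev Beth := {f : ℤ → Mat // BethCompat f}

/-- The 1×1 matrix (2). -/
def Fbar : Mat := ⟨1, 1, fun _ _ => 2⟩

/-!
𝔛_n is closed, being cut out by conditions on single (discrete) coordinates. Its interior is
empty because every diagram B is the limit, as N → ∞, of the diagrams that agree with B up to
level N, have a single vertex at level N + 1 and continue with the matrix (2) forever after;
for N ≥ n these lie outside 𝔛_n.
-/

lemma Beth.continuous_apply (k : ℤ) : Continuous fun B : Beth => B.1 k :=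
  (_root_.continuous_apply k).comp continuous_subtype_val

/-- The level-`N + 1` matrix has one row and as many columns as `f (N + 1)`, which keeps the
dimensions compatible with the unchanged levels `≤ N` and with the 1×1 matrices after it. -/
def fbarTail (f : ℤ → Mat) (N : ℕ) (k : ℤ) : Mat :=
  if k ≤ N then f k else if k = N + 1 then ⟨1, (f k).2.1, fun _ _ => 1⟩ else Fbar

section fbarTail

variable (f : ℤ → Mat) (N : ℕ)

lemma fbarTail_of_le {k : ℤ} (hk : k ≤ N) : fbarTail f N k = f k := if_pos hk

lemma fbarTail_of_gt {k : ℤ} (hk : N + 1 < k) : fbarTail f N k = Fbar := by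
  rw [fbarTail, if_neg (by omega), if_neg (by omega)]

lemma fbarTail_natCast_add_one :
    fbarTail f N (N + 1) = ⟨1, (f (N + 1)).2.1, fun _ _ => 1⟩ := by
  rw [fbarTail, if_neg (by omega), if_pos rfl]

variable {f}

lemma BethCompat.fbarTail (hf : BethCompat f) : BethCompat (fbarTail f N) := by
  obtain ⟨hpos, hneg, hzero⟩ := hf
  refine ⟨fun k hk => ?_, fun k hk => ?_, ?_⟩
  · rcases lt_trichotomy k N with hlt | rfl | hgt
    · rw [fbarTail_of_le f N hlt.le, fbarTail_of_le f N (by omega)]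
      exact hpos k hk
    · rw [fbarTail_of_le f N le_rfl, fbarTail_natCast_add_one]
      exact hpos N hk
    · rw [fbarTail_of_gt f N (by omega : (N : ℤ) + 1 < k + 1)]
      rcases eq_or_lt_of_le (show (N : ℤ) + 1 ≤ k by omega) with rfl | hk'
      · rw [fbarTail_natCast_add_one]; rfl
      · rw [fbarTail_of_gt f N hk']; rfl
  · rw [fbarTail_of_le f N (by omega), fbarTail_of_le f N (by omega)]
    exact hneg k hk
  · rw [fbarTail_of_le f N (by omega : (-1 : ℤ) ≤ N)]
    rcases N.eq_zero_or_pos with rfl | hN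
    · exact hzero
    · rw [fbarTail_of_le f N (by omega)]
      exact hzero

end fbarTail

def Beth.fbarTail (B : Beth) (N : ℕ) : Beth := ⟨_root_.fbarTail B.1 N, B.2.fbarTail N⟩

lemma Beth.tendsto_fbarTail (B : Beth) : Tendsto B.fbarTail atTop (𝓝 B) := by
  refine tendsto_subtype_rng.2 (tendsto_pi_nhds.2 fun k => tendsto_nhds_of_eventually_eq ?_)
  filter_upwards [eventually_ge_atTop k.toNat] with N hN
  exact fbarTail_of_le B.1 N (by omega)

/-- for each n, the set 𝔛_n of bi-infinite Bratteli diagrams whose transition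
matrices differ from the 1×1 matrix (2) at all indices k ≥ n is nowhere dense in ℶ. -/
theorem Xn_nowhere_dense (n : ℕ) :
    IsNowhereDense {B : Beth | ∀ k : ℤ, (n : ℤ) ≤ k → B.1 k ≠ Fbar} := by
  set X : Set Beth := {B : Beth | ∀ k : ℤ, (n : ℤ) ≤ k → B.1 k ≠ Fbar}
  have hX : IsClosed X := by
    simp only [X, Set.ofPred_forall]
    exact isClosed_iInter fun k => isClosed_iInter fun _ =>
      (isClosed_discrete ({Fbar}ᶜ : Set Mat)).preimage (Beth.continuous_apply k)
  rw [hX.isNowhereDense_iff, interior_eq_empty_iff_dense_compl]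
  refine fun B => mem_closure_of_tendsto B.tendsto_fbarTail ?_
  filter_upwards [eventually_ge_atTop n] with N hN hNX
  exact hNX (N + 2) (by omega) (fbarTail_of_gt B.1 N (by omega))
end
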